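/- arXiv:1710.09987 — 2 statements merged into one kernel-verified Lean document; each statement's English description precedes it below -/
import Mathlib

section
/- Let $p$ be an odd prime and $k \geq 1$. Define $c_{p^k}(s) = \sum_{j=0}^{k} \frac{p^{j+1}-1}{p-1} \cdot \frac{p^{k-j+1}-1}{p-1} \cdot p^{(k-2j)s/2}$. Then every zero of $c_{p^k}$ (as a function of the complex variable $s$) is purely imaginary. -/
open Complex

/-- The local factor `c_{p^k}(s) = ∑_{j=0}^k ((p^{j+1}-1)/(p-1)) ((p^{k-j+1}-1)/(p-1)) p^{(k-2j)s/2}`. -/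
noncomputable def cpk (p k : ℕ) (s : ℂ) : ℂ :=
  ∑ j ∈ Finset.range (k + 1),
    (((p : ℂ) ^ (j + 1) - 1) / ((p : ℂ) - 1)) *
    (((p : ℂ) ^ (k - j + 1) - 1) / ((p : ℂ) - 1)) *
    (p : ℂ) ^ ((((k : ℂ) - 2 * (j : ℂ)) * s) / 2)

open Complex Finset Polynomial

/-! ### Auxiliary definitions and lemmas -/

noncomputable def Ee (n : ℕ) (x : ℂ) : ℂ :=
  ∑ j ∈ Finset.range (n + 1), Complex.exp (((n : ℂ) - 2 * j) * x)

lemma Ee_neg (n : ℕ) (x : ℂ) : Ee n (-x) = Ee n x := by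
  unfold Ee
  rw [← Finset.sum_range_reflect]
  refine Finset.sum_congr rfl fun j hj => ?_
  rw [Finset.mem_range] at hj
  have hj' : j ≤ n := by omega
  congr 1
  have h : ((n + 1 - 1 - j : ℕ) : ℂ) = (n : ℂ) - j := by
    have h0 : n + 1 - 1 - j = n - j := rfl
    rw [h0, Nat.cast_sub hj']
  rw [h]
  ring
lemma cosh_eq_re_im (w : ℂ) : Complex.cosh w =
    (Real.cosh w.re * Real.cos w.im : ℝ) + (Real.sinh w.re * Real.sin w.im : ℝ) * I := by
  conv_lhs => rw [← Complex.re_add_im w]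
  rw [Complex.cosh_add, Complex.cosh_mul_I, Complex.sinh_mul_I]
  push_cast [← Complex.ofReal_cosh, ← Complex.ofReal_sinh, ← Complex.ofReal_cos,
    ← Complex.ofReal_sin]
  ring

lemma sinh_eq_re_im (w : ℂ) : Complex.sinh w =
    (Real.sinh w.re * Real.cos w.im : ℝ) + (Real.cosh w.re * Real.sin w.im : ℝ) * I := by
  conv_lhs => rw [← Complex.re_add_im w]
  rw [Complex.sinh_add, Complex.cosh_mul_I, Complex.sinh_mul_I]
  push_cast [← Complex.ofReal_cosh, ← Complex.ofReal_sinh, ← Complex.ofReal_cos,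
    ← Complex.ofReal_sin]
  ring

lemma cosh_re' (w : ℂ) : (Complex.cosh w).re = Real.cosh w.re * Real.cos w.im := by
  rw [cosh_eq_re_im]; simp [Complex.cos_ofReal_re, Complex.sin_ofReal_re, Complex.sinh_ofReal_re, Complex.cosh_ofReal_re]
lemma cosh_im' (w : ℂ) : (Complex.cosh w).im = Real.sinh w.re * Real.sin w.im := by
  rw [cosh_eq_re_im]; simp [Complex.cos_ofReal_re, Complex.sin_ofReal_re, Complex.sinh_ofReal_re, Complex.cosh_ofReal_re]
lemma sinh_re' (w : ℂ) : (Complex.sinh w).re = Real.sinh w.re * Real.cos w.im := by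
  rw [sinh_eq_re_im]; simp [Complex.cos_ofReal_re, Complex.sin_ofReal_re, Complex.sinh_ofReal_re, Complex.cosh_ofReal_re]
lemma sinh_im' (w : ℂ) : (Complex.sinh w).im = Real.cosh w.re * Real.sin w.im := by
  rw [sinh_eq_re_im]; simp [Complex.cos_ofReal_re, Complex.sin_ofReal_re, Complex.sinh_ofReal_re, Complex.cosh_ofReal_re]

lemma factor_lt {v : ℝ} (hv : 0 < v) {w : ℂ} (hw : 0 < w.re) {t : ℝ} (ht : |t| ≤ 2) :
    ‖2 * Complex.cosh ((v : ℂ) - w) - (t : ℂ)‖ <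
    ‖2 * Complex.cosh ((v : ℂ) + w) - (t : ℂ)‖ := by
  set A : ℂ := 2 * (Real.cosh v : ℂ) * Complex.cosh w - (t : ℂ) with hA
  set B : ℂ := 2 * (Real.sinh v : ℂ) * Complex.sinh w with hB
  have e1 : 2 * Complex.cosh ((v : ℂ) + w) - (t : ℂ) = A + B := by
    rw [Complex.cosh_add, hA, hB, ← Complex.ofReal_cosh, ← Complex.ofReal_sinh]; ring
  have e2 : 2 * Complex.cosh ((v : ℂ) - w) - (t : ℂ) = A - B := by
    rw [Complex.cosh_sub, hA, hB, ← Complex.ofReal_cosh, ← Complex.ofReal_sinh]; ring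
  rw [e1, e2, Complex.norm_def, Complex.norm_def]
  apply Real.sqrt_lt_sqrt (Complex.normSq_nonneg _)
  rw [Complex.normSq_sub, Complex.normSq_add]
  have key : 0 < (A * (starRingEnd ℂ) B).re := by
    have hre : (A * (starRingEnd ℂ) B).re = A.re * B.re + A.im * B.im := by
      simp [Complex.mul_re, Complex.conj_re, Complex.conj_im]
    have hAre : A.re = 2 * Real.cosh v * (Real.cosh w.re * Real.cos w.im) - t := by
      simp [hA, Complex.mul_re, cosh_re', cosh_im']
    have hAim : A.im = 2 * Real.cosh v * (Real.sinh w.re * Real.sin w.im) := by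
      simp [hA, Complex.mul_im, cosh_re', cosh_im']
    have hBre : B.re = 2 * Real.sinh v * (Real.sinh w.re * Real.cos w.im) := by
      simp [hB, Complex.mul_re, sinh_re', sinh_im']
    have hBim : B.im = 2 * Real.sinh v * (Real.cosh w.re * Real.sin w.im) := by
      simp [hB, Complex.mul_im, sinh_re', sinh_im']
    rw [hre, hAre, hAim, hBre, hBim]
    have hsv : 0 < Real.sinh v := Real.sinh_pos_iff.mpr hv
    have hsa : 0 < Real.sinh w.re := Real.sinh_pos_iff.mpr hw
    have h1 : 1 < Real.cosh v := Real.one_lt_cosh.mpr hv.ne'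
    have h2 : (1:ℝ) ≤ Real.cosh w.re := Real.one_le_cosh w.re
    have hc1 : Real.cos w.im ≤ 1 := Real.cos_le_one _
    have hc2 : -1 ≤ Real.cos w.im := Real.neg_one_le_cos _
    have hpy : Real.sin w.im ^ 2 + Real.cos w.im ^ 2 = 1 := Real.sin_sq_add_cos_sq _
    obtain ⟨ht2, ht1⟩ := abs_le.mp ht
    have heq : (2 * Real.cosh v * (Real.cosh w.re * Real.cos w.im) - t) *
        (2 * Real.sinh v * (Real.sinh w.re * Real.cos w.im)) +
        2 * Real.cosh v * (Real.sinh w.re * Real.sin w.im) *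
        (2 * Real.sinh v * (Real.cosh w.re * Real.sin w.im)) =
        2 * Real.sinh v * Real.sinh w.re *
          (2 * Real.cosh v * Real.cosh w.re - t * Real.cos w.im) := by
      linear_combination (4 * Real.cosh v * Real.sinh v * Real.sinh w.re * Real.cosh w.re) * hpy
    rw [heq]
    have h3 : 0 < 2 * Real.cosh v * Real.cosh w.re - t * Real.cos w.im := by
      nlinarith
    positivity
  linarith

lemma theta_mem {n j : ℕ} (hj : j < n) :
    0 < ((j : ℝ) + 1) * Real.pi / (n + 1) ∧ ((j : ℝ) + 1) * Real.pi / (n + 1) < Real.pi := by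
  have hπ := Real.pi_pos
  constructor
  · positivity
  · rw [div_lt_iff₀ (by positivity)]
    have : (j : ℝ) + 1 < (n : ℝ) + 1 := by exact_mod_cast Nat.succ_lt_succ hj
    nlinarith

lemma exp_mul_I_re (θ : ℝ) : (Complex.exp ((θ : ℂ) * I)).re = Real.cos θ := by
  rw [Complex.exp_mul_I]
  simp [Complex.cos_ofReal_re, Complex.sin_ofReal_re]

lemma exp_mul_I_im (θ : ℝ) : (Complex.exp ((θ : ℂ) * I)).im = Real.sin θ := by
  rw [Complex.exp_mul_I]
  simp [Complex.cos_ofReal_im, Complex.sin_ofReal_re]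

lemma polyId (n : ℕ) :
    (∑ j ∈ Finset.range (n + 1), (Polynomial.X : Polynomial ℂ) ^ (2 * j)) =
    ∏ j ∈ Finset.range n,
      (Polynomial.X ^ 2 - Polynomial.C ((2 * Real.cos (((j : ℝ) + 1) * Real.pi / (n + 1)) : ℝ) : ℂ) * Polynomial.X + 1) := by
  rcases Nat.eq_zero_or_pos n with rfl | hn
  · simp
  set θ : ℕ → ℝ := fun j => ((j : ℝ) + 1) * Real.pi / (n + 1) with hθ
  set P : Polynomial ℂ := ∑ j ∈ Finset.range (n + 1), (Polynomial.X : Polynomial ℂ) ^ (2 * j) with hP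
  set Q : Polynomial ℂ := ∏ j ∈ Finset.range n,
      (Polynomial.X ^ 2 - Polynomial.C ((2 * Real.cos (θ j) : ℝ) : ℂ) * Polynomial.X + 1) with hQ
  -- monicity and degrees
  have hfacdeg : ∀ c : ℂ, ((1 : Polynomial ℂ) - Polynomial.C c * Polynomial.X).degree < ((2 : ℕ) : WithBot ℕ) := by
    intro c
    apply lt_of_le_of_lt (Polynomial.degree_sub_le _ _)
    apply max_lt
    · exact lt_of_le_of_lt Polynomial.degree_one_le (by exact_mod_cast Nat.lt_irrefl 0 |> fun _ => (by norm_num : ((0:ℕ) : WithBot ℕ) < ((2:ℕ) : WithBot ℕ)))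
    · exact lt_of_le_of_lt (Polynomial.degree_C_mul_X_le _) (by exact_mod_cast (by norm_num : (1:ℕ) < 2))
  have hfac : ∀ c : ℂ, (Polynomial.X ^ 2 - Polynomial.C c * Polynomial.X + 1 : Polynomial ℂ) =
      Polynomial.X ^ 2 + (1 - Polynomial.C c * Polynomial.X) := by intro c; ring
  have hfacmonic : ∀ c : ℂ, (Polynomial.X ^ 2 - Polynomial.C c * Polynomial.X + 1 : Polynomial ℂ).Monic := by
    intro c; rw [hfac]; exact Polynomial.monic_X_pow_add (hfacdeg c)
  have hfacdeg2 : ∀ c : ℂ, (Polynomial.X ^ 2 - Polynomial.C c * Polynomial.X + 1 : Polynomial ℂ).degree = ((2:ℕ) : WithBot ℕ) := by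
    intro c; rw [hfac, add_comm,
      Polynomial.degree_add_eq_right_of_degree_lt (by rw [Polynomial.degree_X_pow]; exact_mod_cast hfacdeg c)]
    exact Polynomial.degree_X_pow 2
  have hQmonic : Q.Monic := Polynomial.monic_prod_of_monic _ _ fun j _ => hfacmonic _
  have hQdeg : Q.degree = ((2 * n : ℕ) : WithBot ℕ) := by
    rw [Polynomial.degree_eq_natDegree hQmonic.ne_zero]
    norm_cast
    rw [hQ, Polynomial.natDegree_prod _ _ fun j _ => (hfacmonic _).ne_zero]
    rw [Finset.sum_congr rfl fun j _ => Polynomial.natDegree_eq_of_degree_eq_some (hfacdeg2 _)]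
    simp [Finset.sum_const, mul_comm]
  have hRdeg : (∑ j ∈ Finset.range n, (Polynomial.X : Polynomial ℂ) ^ (2 * j)).degree < ((2 * n : ℕ) : WithBot ℕ) := by
    apply lt_of_le_of_lt (Polynomial.degree_sum_le _ _)
    rw [Finset.sup_lt_iff (by exact_mod_cast WithBot.bot_lt_coe (2 * n))]
    intro j hj
    rw [Finset.mem_range] at hj
    rw [Polynomial.degree_X_pow]
    exact_mod_cast (by omega : 2 * j < 2 * n)
  have hPsplit : P = (∑ j ∈ Finset.range n, (Polynomial.X : Polynomial ℂ) ^ (2 * j)) + Polynomial.X ^ (2 * n) := by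
    rw [hP, Finset.sum_range_succ]
  have hPdeg : P.degree = ((2 * n : ℕ) : WithBot ℕ) := by
    rw [hPsplit, Polynomial.degree_add_eq_right_of_degree_lt (by rw [Polynomial.degree_X_pow]; exact hRdeg),
      Polynomial.degree_X_pow]
  have hPmonic : P.Monic := by
    rw [hPsplit, add_comm]
    exact Polynomial.monic_X_pow_add hRdeg
  -- roots
  set μ : ℕ → ℂ := fun j => Complex.exp ((θ j : ℂ) * I) with hμ
  set ν : ℕ → ℂ := fun j => Complex.exp (((-θ j : ℝ) : ℂ) * I) with hν
  have hμre : ∀ j, (μ j).re = Real.cos (θ j) := fun j => exp_mul_I_re _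
  have hνre : ∀ j, (ν j).re = Real.cos (θ j) := by
    intro j; simp only [hν]; rw [exp_mul_I_re, Real.cos_neg]
  have hμim : ∀ j, (μ j).im = Real.sin (θ j) := fun j => exp_mul_I_im _
  have hνim : ∀ j, (ν j).im = -Real.sin (θ j) := by
    intro j; simp only [hν]; rw [exp_mul_I_im, Real.sin_neg]
  have hθinj : ∀ j1 ∈ Finset.range n, ∀ j2 ∈ Finset.range n, θ j1 = θ j2 → j1 = j2 := by
    intro j1 _ j2 _ h
    simp only [hθ] at h
    have hπ := Real.pi_ne_zero
    field_simp at h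
    have h' : (j1 : ℝ) = j2 := by linarith
    exact_mod_cast h'
  have hcosinj : ∀ j1 ∈ Finset.range n, ∀ j2 ∈ Finset.range n,
      Real.cos (θ j1) = Real.cos (θ j2) → j1 = j2 := by
    intro j1 h1 j2 h2 h
    have m1 := theta_mem (Finset.mem_range.mp h1)
    have m2 := theta_mem (Finset.mem_range.mp h2)
    exact hθinj j1 h1 j2 h2 (Real.injOn_cos ⟨m1.1.le, m1.2.le⟩ ⟨m2.1.le, m2.2.le⟩ h)
  have hμinj : Set.InjOn μ (Finset.range n) := by
    intro j1 h1 j2 h2 h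
    exact hcosinj j1 (by simpa using h1) j2 (by simpa using h2) (by rw [← hμre, ← hμre, h])
  have hνinj : Set.InjOn ν (Finset.range n) := by
    intro j1 h1 j2 h2 h
    exact hcosinj j1 (by simpa using h1) j2 (by simpa using h2) (by rw [← hνre, ← hνre, h])
  set S : Finset ℂ := (Finset.range n).image μ ∪ (Finset.range n).image ν with hS
  have hdisj : Disjoint ((Finset.range n).image μ) ((Finset.range n).image ν) := by
    rw [Finset.disjoint_left]
    rintro z hz1 hz2
    obtain ⟨j1, hj1, rfl⟩ := Finset.mem_image.mp hz1
    obtain ⟨j2, hj2, he⟩ := Finset.mem_image.mp hz2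
    have hs1 : 0 < Real.sin (θ j1) :=
      Real.sin_pos_of_pos_of_lt_pi (theta_mem (Finset.mem_range.mp hj1)).1
        (theta_mem (Finset.mem_range.mp hj1)).2
    have hs2 : 0 < Real.sin (θ j2) :=
      Real.sin_pos_of_pos_of_lt_pi (theta_mem (Finset.mem_range.mp hj2)).1
        (theta_mem (Finset.mem_range.mp hj2)).2
    have := congrArg Complex.im he
    rw [hνim, hμim] at this
    linarith
  have hScard : #S = 2 * n := by
    rw [hS, Finset.card_union_of_disjoint hdisj, Finset.card_image_of_injOn hμinj,
      Finset.card_image_of_injOn hνinj, Finset.card_range]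
    ring
  -- evaluation
  have hfaczero : ∀ j ∈ Finset.range n, ∀ z : ℂ,
      (z = μ j ∨ z = ν j) → Polynomial.eval z
        (Polynomial.X ^ 2 - Polynomial.C ((2 * Real.cos (θ j) : ℝ) : ℂ) * Polynomial.X + 1) = 0 := by
    intro j _ z hz
    have hcos : ((2 * Real.cos (θ j) : ℝ) : ℂ) = μ j + ν j := by
      have h1 : ((2 * Real.cos (θ j) : ℝ) : ℂ) = 2 * Complex.cos ((θ j : ℝ) : ℂ) := by
        push_cast; ring
      have h2 : μ j + ν j = Complex.exp (((θ j : ℝ) : ℂ) * I) + Complex.exp (-(((θ j : ℝ) : ℂ) * I)) := by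
        simp only [hμ, hν]; push_cast; ring_nf
      rw [h1, h2, Complex.two_cos]; ring_nf
    simp only [Polynomial.eval_add, Polynomial.eval_sub, Polynomial.eval_mul, Polynomial.eval_pow,
      Polynomial.eval_X, Polynomial.eval_C, Polynomial.eval_one]
    have hμν : μ j * ν j = 1 := by
      simp only [hμ, hν]
      rw [← Complex.exp_add]
      push_cast
      ring_nf
      exact Complex.exp_zero
    rcases hz with rfl | rfl <;> rw [hcos] <;> linear_combination -hμν
  have hQzero : ∀ z ∈ S, Polynomial.eval z Q = 0 := by
    intro z hz
    rw [hS, Finset.mem_union] at hz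
    rw [hQ, Polynomial.eval_prod]
    rcases hz with hz | hz
    · obtain ⟨j, hj, rfl⟩ := Finset.mem_image.mp hz
      exact Finset.prod_eq_zero hj (hfaczero j hj _ (Or.inl rfl))
    · obtain ⟨j, hj, rfl⟩ := Finset.mem_image.mp hz
      exact Finset.prod_eq_zero hj (hfaczero j hj _ (Or.inr rfl))
  have hPzero : ∀ z ∈ S, Polynomial.eval z P = 0 := by
    intro z hz
    have hzform : ∃ j, j < n ∧ (z ^ 2 = Complex.exp (((2 * θ j : ℝ) : ℂ) * I) ∨
        z ^ 2 = Complex.exp (((-(2 * θ j) : ℝ) : ℂ) * I)) := by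
      rw [hS, Finset.mem_union] at hz
      rcases hz with hz | hz
      · obtain ⟨j, hj, rfl⟩ := Finset.mem_image.mp hz
        refine ⟨j, Finset.mem_range.mp hj, Or.inl ?_⟩
        simp only [hμ]
        rw [← Complex.exp_nat_mul]
        push_cast
        ring_nf
      · obtain ⟨j, hj, rfl⟩ := Finset.mem_image.mp hz
        refine ⟨j, Finset.mem_range.mp hj, Or.inr ?_⟩
        simp only [hν]
        rw [← Complex.exp_nat_mul]
        push_cast
        ring_nf
    obtain ⟨j, hj, hzsq⟩ := hzform
    have hθj := theta_mem (n := n) (j := j) hj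
    have harg : ((n + 1 : ℕ) : ℂ) * (((2 * θ j : ℝ) : ℂ) * I) = ((j + 1 : ℕ) : ℂ) * (2 * (Real.pi : ℂ) * I) := by
      simp only [hθ]
      have hne : (n : ℂ) + 1 ≠ 0 := Nat.cast_add_one_ne_zero n
      push_cast
      field_simp
    have hpow : (z ^ 2) ^ (n + 1) = 1 := by
      rcases hzsq with h | h <;> rw [h, ← Complex.exp_nat_mul]
      · rw [harg]
        exact Complex.exp_nat_mul_two_pi_mul_I (j + 1)
      · rw [show ((n + 1 : ℕ) : ℂ) * (((-(2 * θ j) : ℝ) : ℂ) * I) = -(((j + 1 : ℕ) : ℂ) * (2 * (Real.pi : ℂ) * I)) by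
            rw [← harg]; push_cast; ring]
        rw [Complex.exp_neg, Complex.exp_nat_mul_two_pi_mul_I (j + 1)]
        norm_num
    have hne1 : z ^ 2 ≠ 1 := by
      intro h1
      have hre : (z ^ 2).re = 1 := by rw [h1]; simp
      have hcos1 : Real.cos (2 * θ j) = 1 := by
        rcases hzsq with h | h
        · rw [h, exp_mul_I_re] at hre; exact hre
        · rw [h, exp_mul_I_re, Real.cos_neg] at hre; exact hre
      have h0 : 0 < 2 * θ j := by linarith [hθj.1]
      have h2 : 2 * θ j < 2 * Real.pi := by linarith [hθj.2]
      have := (Real.cos_eq_one_iff_of_lt_of_lt (by linarith) h2).mp hcos1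
      linarith
    rw [hP, Polynomial.eval_finset_sum]
    have hconv : ∀ i ∈ Finset.range (n+1),
        Polynomial.eval z ((Polynomial.X : Polynomial ℂ) ^ (2*i)) = (z ^ 2) ^ i := by
      intro i _
      rw [Polynomial.eval_pow, Polynomial.eval_X, pow_mul]
    rw [Finset.sum_congr rfl hconv, geom_sum_eq hne1, hpow]
    simp
  -- conclude
  have hlc : P.leadingCoeff = Q.leadingCoeff := by rw [hPmonic.leadingCoeff, hQmonic.leadingCoeff]
  have hdeq : P.degree = Q.degree := by rw [hPdeg, hQdeg]
  by_cases h0 : P - Q = 0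
  · exact sub_eq_zero.mp h0
  exfalso
  apply h0
  apply Polynomial.eq_zero_of_natDegree_lt_card_of_eval_eq_zero' (P - Q) S
  · intro z hz
    rw [Polynomial.eval_sub, hPzero z hz, hQzero z hz, sub_zero]
  · rw [hScard]
    rw [Polynomial.natDegree_lt_iff_degree_lt h0]
    rw [← hPdeg]
    exact Polynomial.degree_sub_lt hdeq hPmonic.ne_zero hlc

lemma Ee_prod (n : ℕ) (x : ℂ) :
    Ee n x = ∏ j ∈ Finset.range n,
      (2 * Complex.cosh x - ((2 * Real.cos (((j : ℝ) + 1) * Real.pi / (n + 1)) : ℝ) : ℂ)) := by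
  have h1 : Ee n x = Complex.exp (-(n : ℂ) * x) *
      Polynomial.eval (Complex.exp x) (∑ j ∈ Finset.range (n + 1), (Polynomial.X : Polynomial ℂ) ^ (2 * j)) := by
    rw [← Ee_neg]
    unfold Ee
    rw [Polynomial.eval_finset_sum, Finset.mul_sum]
    refine Finset.sum_congr rfl fun j _ => ?_
    rw [Polynomial.eval_pow, Polynomial.eval_X, ← Complex.exp_nat_mul, ← Complex.exp_add]
    congr 1
    push_cast
    ring
  rw [h1, polyId, Polynomial.eval_prod]
  have h2 : Complex.exp (-(n : ℂ) * x) = ∏ _j ∈ Finset.range n, Complex.exp (-x) := by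
    rw [Finset.prod_const, Finset.card_range, ← Complex.exp_nat_mul]
    congr 1
    ring
  rw [h2, ← Finset.prod_mul_distrib]
  refine Finset.prod_congr rfl fun j _ => ?_
  rw [Polynomial.eval_add, Polynomial.eval_sub, Polynomial.eval_mul, Polynomial.eval_pow,
    Polynomial.eval_X, Polynomial.eval_C, Polynomial.eval_one, Complex.two_cosh]
  have h : Complex.exp x * Complex.exp (-x) = 1 := by rw [← Complex.exp_add]; simp
  linear_combination (Complex.exp x - ((2 * Real.cos (((j : ℝ) + 1) * Real.pi / (n + 1)) : ℝ) : ℂ)) * h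

lemma cosh_diff (a b : ℂ) :
    Complex.cosh (a + b) - Complex.cosh (a - b) = 2 * Complex.sinh b * Complex.sinh a := by
  rw [Complex.cosh_add, Complex.cosh_sub]; ring

lemma exp_shift (w m : ℂ) : 2 * Complex.sinh w * Complex.exp (m * w) =
    Complex.exp ((m + 1) * w) - Complex.exp ((m - 1) * w) := by
  have h := Complex.two_sinh w
  calc 2 * Complex.sinh w * Complex.exp (m * w)
      = (2 * Complex.sinh w) * Complex.exp (m * w) := by ring
    _ = (Complex.exp w - Complex.exp (-w)) * Complex.exp (m * w) := by rw [h]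
    _ = Complex.exp (m * w + w) - Complex.exp (m * w + -w) := by
        rw [Complex.exp_add, Complex.exp_add]; ring
    _ = Complex.exp ((m + 1) * w) - Complex.exp ((m - 1) * w) := by
        congr 1 <;> congr 1 <;> ring

lemma key_identity (k : ℕ) (v w : ℂ) :
    2 * Complex.sinh w *
      (∑ j ∈ Finset.range (k + 1),
        (Complex.cosh (((k : ℂ) + 2) * v) - Complex.cosh (((k : ℂ) - 2 * j) * v)) *
          Complex.exp (((k : ℂ) - 2 * j) * w)) =
    Complex.sinh v * (Ee (k + 1) (v + w) - Ee (k + 1) (v - w)) := by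
  set g : ℕ → ℂ := fun j =>
    Complex.cosh (((k : ℂ) + 2) * v) - Complex.cosh (((k : ℂ) - 2 * (j : ℂ)) * v) with hg
  set f : ℕ → ℂ := fun j =>
    2 * Complex.sinh v * Complex.sinh (((k : ℂ) + 1 - 2 * j) * v) *
      Complex.exp (((k : ℂ) + 1 - 2 * j) * w) with hf
  -- Step A : LHS = ∑_{j<k+2} f j
  have hA : 2 * Complex.sinh w *
      (∑ j ∈ Finset.range (k + 1), g j * Complex.exp (((k : ℂ) - 2 * j) * w)) =
      ∑ j ∈ Finset.range (k + 2), f j := by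
    have h1 : 2 * Complex.sinh w *
        (∑ j ∈ Finset.range (k + 1), g j * Complex.exp (((k : ℂ) - 2 * j) * w)) =
        (∑ j ∈ Finset.range (k + 1), g j * Complex.exp (((k : ℂ) + 1 - 2 * j) * w)) -
        (∑ j ∈ Finset.range (k + 1), g j * Complex.exp (((k : ℂ) - 1 - 2 * j) * w)) := by
      rw [Finset.mul_sum, ← Finset.sum_sub_distrib]
      refine Finset.sum_congr rfl fun j _ => ?_
      have := exp_shift w ((k : ℂ) - 2 * j)
      calc 2 * Complex.sinh w * (g j * Complex.exp (((k : ℂ) - 2 * j) * w))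
          = g j * (2 * Complex.sinh w * Complex.exp (((k : ℂ) - 2 * j) * w)) := by ring
        _ = g j * (Complex.exp (((k : ℂ) - 2 * j + 1) * w) -
              Complex.exp (((k : ℂ) - 2 * j - 1) * w)) := by rw [this]
        _ = g j * Complex.exp (((k : ℂ) + 1 - 2 * j) * w) -
              g j * Complex.exp (((k : ℂ) - 1 - 2 * j) * w) := by
            rw [show ((k : ℂ) - 2 * j + 1) = ((k : ℂ) + 1 - 2 * j) by ring,
              show ((k : ℂ) - 2 * j - 1) = ((k : ℂ) - 1 - 2 * j) by ring]
            ring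
    rw [h1]
    -- extend the first sum to k+2 using g (k+1) = 0
    have hgtop : g (k + 1) = 0 := by
      simp only [hg]
      rw [show ((k : ℂ) - 2 * ((k : ℕ) + 1 : ℕ)) = -(((k : ℂ) + 2)) by push_cast; ring]
      rw [neg_mul, Complex.cosh_neg, sub_self]
    have h2 : (∑ j ∈ Finset.range (k + 2), g j * Complex.exp (((k : ℂ) + 1 - 2 * j) * w)) =
        ∑ j ∈ Finset.range (k + 1), g j * Complex.exp (((k : ℂ) + 1 - 2 * j) * w) := by
      rw [Finset.sum_range_succ, hgtop, zero_mul, add_zero]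
    rw [← h2]
    -- shift index on the k+2 sum
    rw [Finset.sum_range_succ' (fun j => g j * Complex.exp (((k : ℂ) + 1 - 2 * j) * w)) (k + 1)]
    rw [Finset.sum_range_succ' f (k + 1)]
    have h3 : ∀ i, g (i + 1) * Complex.exp (((k : ℂ) + 1 - 2 * (i + 1 : ℕ)) * w) -
        g i * Complex.exp (((k : ℂ) - 1 - 2 * i) * w) = f (i + 1) := by
      intro i
      have hexp : ((k : ℂ) + 1 - 2 * ((i : ℕ) + 1 : ℕ)) = ((k : ℂ) - 1 - 2 * i) := by
        push_cast; ring
      rw [hexp]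
      have hgg : g (i + 1) - g i = 2 * Complex.sinh v * Complex.sinh (((k : ℂ) - 1 - 2 * i) * v) := by
        simp only [hg]
        have e1 : ((k : ℂ) - 2 * (i : ℂ)) * v = ((k : ℂ) - 1 - 2 * i) * v + v := by ring
        have e2 : ((k : ℂ) - 2 * ((i : ℕ) + 1 : ℕ)) * v = ((k : ℂ) - 1 - 2 * i) * v - v := by
          push_cast; ring
        rw [e1, e2]
        have := cosh_diff (((k : ℂ) - 1 - 2 * i) * v) v
        linear_combination this
      have : f (i + 1) = 2 * Complex.sinh v * Complex.sinh (((k : ℂ) - 1 - 2 * i) * v) *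
          Complex.exp (((k : ℂ) - 1 - 2 * i) * w) := by
        simp only [hf]
        rw [show ((k : ℂ) + 1 - 2 * ((i : ℕ) + 1 : ℕ)) = ((k : ℂ) - 1 - 2 * i) by push_cast; ring]
      rw [this, ← hgg]
      ring
    have h4 : f 0 = g 0 * Complex.exp (((k : ℂ) + 1 - 2 * (0 : ℕ)) * w) := by
      simp only [hf, hg]
      have hgzero : g 0 = 2 * Complex.sinh v * Complex.sinh (((k : ℂ) + 1) * v) := by
        simp only [hg]
        have e1 : ((k : ℂ) + 2) * v = ((k : ℂ) + 1) * v + v := by ring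
        have e2 : ((k : ℂ) - 2 * (0 : ℕ)) * v = ((k : ℂ) + 1) * v - v := by push_cast; ring
        rw [e1, e2]
        have := cosh_diff (((k : ℂ) + 1) * v) v
        linear_combination this
      simp only [hg] at hgzero
      rw [hgzero]
      push_cast
      ring_nf
    have h5 : (∑ i ∈ Finset.range (k + 1), g (i + 1) * Complex.exp (((k : ℂ) + 1 - 2 * ((i : ℕ) + 1 : ℕ)) * w)) -
        ∑ i ∈ Finset.range (k + 1), g i * Complex.exp (((k : ℂ) - 1 - 2 * i) * w) =
        ∑ i ∈ Finset.range (k + 1), f (i + 1) := by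
      rw [← Finset.sum_sub_distrib]
      exact Finset.sum_congr rfl fun i _ => h3 i
    linear_combination h5 - h4
  rw [hA]
  -- Step B
  have hrefl : Ee (k + 1) (v - w) = Ee (k + 1) (w - v) := by
    rw [← Ee_neg, neg_sub]
  rw [hrefl]
  unfold Ee
  rw [← Finset.sum_sub_distrib, Finset.mul_sum]
  refine (Finset.sum_congr rfl fun j hj => ?_).symm
  have hcast : (((k + 1 : ℕ) : ℂ)) = (k : ℂ) + 1 := by push_cast; ring
  rw [hcast]
  set m : ℂ := (k : ℂ) + 1 - 2 * j with hm
  have h1 : Complex.exp (m * (v + w)) = Complex.exp (m * v) * Complex.exp (m * w) := by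
    rw [← Complex.exp_add]; congr 1; ring
  have h2 : Complex.exp (m * (w - v)) = Complex.exp (-(m * v)) * Complex.exp (m * w) := by
    rw [← Complex.exp_add]; congr 1; ring
  have h3 : Complex.sinh (m * v) = (Complex.exp (m * v) - Complex.exp (-(m * v))) / 2 := rfl
  rw [h1, h2]
  simp only [hf]
  rw [← hm, h3]
  ring

lemma prod_abs_lt {n : ℕ} (hn : 0 < n) {f g : ℕ → ℝ}
    (h0 : ∀ i ∈ Finset.range n, 0 ≤ g i) (h : ∀ i ∈ Finset.range n, g i < f i) :
    ∏ i ∈ Finset.range n, g i < ∏ i ∈ Finset.range n, f i := by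
  by_cases hg : ∀ i ∈ Finset.range n, 0 < g i
  · exact Finset.prod_lt_prod_of_nonempty hg h (by simp [hn.ne'])
  · push_neg at hg
    obtain ⟨i, hi, hgi⟩ := hg
    have hgi0 : g i = 0 := le_antisymm hgi (h0 i hi)
    rw [Finset.prod_eq_zero hi hgi0]
    exact Finset.prod_pos fun j hj => lt_of_le_of_lt (h0 j hj) (h j hj)

lemma Ee_abs_lt {n : ℕ} (hn : 0 < n) {v : ℝ} (hv : 0 < v) {w : ℂ} (hw : 0 < w.re) :
    ‖Ee n ((v : ℂ) - w)‖ < ‖Ee n ((v : ℂ) + w)‖ := by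
  rw [Ee_prod n ((v : ℂ) - w), Ee_prod n ((v : ℂ) + w), Complex.norm_prod, Complex.norm_prod]
  apply prod_abs_lt hn (fun i _ => norm_nonneg _)
  intro i _
  apply factor_lt hv hw
  rw [abs_mul, show |(2:ℝ)| = 2 by norm_num]
  have := Real.abs_cos_le_one (((i : ℝ) + 1) * Real.pi / (n + 1))
  linarith

/-! ### The local factor -/

lemma cpk_eq (p k : ℕ) (hp : 2 ≤ p) (s : ℂ) :
    cpk p k s * ((p : ℂ) - 1) ^ 2 =
      2 * Complex.exp (((k : ℂ) + 2) * ((Real.log p / 2 : ℝ) : ℂ)) *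
      ∑ j ∈ Finset.range (k + 1),
        (Complex.cosh (((k : ℂ) + 2) * ((Real.log p / 2 : ℝ) : ℂ)) -
          Complex.cosh (((k : ℂ) - 2 * j) * ((Real.log p / 2 : ℝ) : ℂ))) *
        Complex.exp (((k : ℂ) - 2 * j) * (s * ((Real.log p / 2 : ℝ) : ℂ))) := by
  set v : ℂ := ((Real.log p / 2 : ℝ) : ℂ) with hv
  have hppos : (0 : ℝ) < p := by positivity
  have hp1 : (1 : ℝ) < p := by exact_mod_cast hp
  have hpne : (p : ℂ) ≠ 0 := by exact_mod_cast (by positivity : (0:ℝ) < p).ne'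
  have hpne1 : (p : ℂ) - 1 ≠ 0 := by
    intro h
    have : (p : ℂ) = 1 := by linear_combination h
    have : p = 1 := by exact_mod_cast this
    omega
  have hplog : (p : ℂ) = Complex.exp (2 * v) := by
    rw [hv]
    rw [show (2 : ℂ) * ((Real.log p / 2 : ℝ) : ℂ) = ((Real.log p : ℝ) : ℂ) by push_cast; ring]
    rw [← Complex.ofReal_exp, Real.exp_log hppos]
    norm_cast
  unfold cpk
  rw [Finset.sum_mul, Finset.mul_sum]
  refine Finset.sum_congr rfl fun j hj => ?_
  rw [Finset.mem_range] at hj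
  have hjk : j ≤ k := by omega
  -- rewrite the cpow as an exponential
  have hcpow : (p : ℂ) ^ ((((k : ℂ) - 2 * (j : ℂ)) * s) / 2) =
      Complex.exp (((k : ℂ) - 2 * j) * (s * v)) := by
    rw [Complex.cpow_def_of_ne_zero hpne]
    have hlog : Complex.log (p : ℂ) = ((Real.log p : ℝ) : ℂ) := by
      rw [show ((p : ℕ) : ℂ) = (((p : ℝ)) : ℂ) by push_cast; ring]
      rw [← Complex.ofReal_log hppos.le]
    rw [hlog, hv]
    congr 1
    push_cast
    ring
  rw [hcpow]
  -- rewrite the powers of p as exponentials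
  have hpow1 : (p : ℂ) ^ (j + 1) = Complex.exp (2 * ((j : ℂ) + 1) * v) := by
    rw [hplog, ← Complex.exp_nat_mul]
    congr 1
    push_cast
    ring
  have hpow2 : (p : ℂ) ^ (k - j + 1) = Complex.exp (2 * ((k : ℂ) - j + 1) * v) := by
    rw [hplog, ← Complex.exp_nat_mul]
    congr 1
    push_cast [Nat.cast_sub hjk]
    ring
  rw [hpow1, hpow2]
  -- main scalar identity
  have h1 : Complex.exp (((k : ℂ) + 2) * v) * Complex.exp (-(((k : ℂ) + 2) * v)) = 1 := by
    rw [← Complex.exp_add, show ((k : ℂ) + 2) * v + -(((k : ℂ) + 2) * v) = 0 by ring,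
      Complex.exp_zero]
  have h2 : Complex.exp (((k : ℂ) + 2) * v) * Complex.exp (((k : ℂ) - 2 * j) * v) =
      Complex.exp (2 * ((k : ℂ) - j + 1) * v) := by
    rw [← Complex.exp_add]
    congr 1
    ring
  have h3 : Complex.exp (((k : ℂ) + 2) * v) * Complex.exp (-(((k : ℂ) - 2 * j) * v)) =
      Complex.exp (2 * ((j : ℂ) + 1) * v) := by
    rw [← Complex.exp_add]
    congr 1
    ring
  have h4 : Complex.exp (((k : ℂ) - 2 * j) * v) * Complex.exp (-(((k : ℂ) - 2 * j) * v)) = 1 := by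
    rw [← Complex.exp_add, show ((k : ℂ) - 2 * j) * v + -(((k : ℂ) - 2 * j) * v) = 0 by ring,
      Complex.exp_zero]
  have hcosh1 : Complex.cosh (((k : ℂ) + 2) * v) =
      (Complex.exp (((k : ℂ) + 2) * v) + Complex.exp (-(((k : ℂ) + 2) * v))) / 2 := rfl
  have hcosh2 : Complex.cosh (((k : ℂ) - 2 * j) * v) =
      (Complex.exp (((k : ℂ) - 2 * j) * v) + Complex.exp (-(((k : ℂ) - 2 * j) * v))) / 2 := rfl
  have hM : (Complex.exp (2 * ((j : ℂ) + 1) * v) - 1) * (Complex.exp (2 * ((k : ℂ) - j + 1) * v) - 1) =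
      2 * Complex.exp (((k : ℂ) + 2) * v) *
        (Complex.cosh (((k : ℂ) + 2) * v) - Complex.cosh (((k : ℂ) - 2 * j) * v)) := by
    rw [hcosh1, hcosh2]
    linear_combination (1 - Complex.exp (2 * ((j : ℂ) + 1) * v)) * h2 +
      (1 - Complex.exp (((k : ℂ) + 2) * v) * Complex.exp (((k : ℂ) - 2 * j) * v)) * h3 +
      (Complex.exp (((k : ℂ) + 2) * v)) ^ 2 * h4 - h1
  have hfield : ∀ (a b c d : ℂ), d ≠ 0 → a / d * (b / d) * c * d ^ 2 = a * b * c := by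
    intro a b c d hd
    have h : a / d * (b / d) * c * d ^ 2 = a * b * c * (d / d) * (d / d) := by ring
    rw [h, div_self hd]
    ring
  rw [hfield _ _ _ _ hpne1]
  linear_combination Complex.exp (((k : ℂ) - 2 * j) * (s * v)) * hM

theorem stmt4 (p : ℕ) (hp : p.Prime) (hodd : Odd p) (k : ℕ) (hk : 1 ≤ k)
    (s : ℂ) (hs : cpk p k s = 0) : s.re = 0 := by
  by_contra hre
  have hp2 : 2 ≤ p := hp.two_le
  have hp1 : (1 : ℝ) < p := by exact_mod_cast hp2
  have hlog : 0 < Real.log p := Real.log_pos hp1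
  set vR : ℝ := Real.log p / 2 with hvR
  have hvpos : 0 < vR := by rw [hvR]; positivity
  set v : ℂ := ((vR : ℝ) : ℂ) with hv
  set w₀ : ℂ := s * v with hw₀
  -- the inner sum vanishes
  have hT : (∑ j ∈ Finset.range (k + 1),
      (Complex.cosh (((k : ℂ) + 2) * v) - Complex.cosh (((k : ℂ) - 2 * j) * v)) *
        Complex.exp (((k : ℂ) - 2 * j) * w₀)) = 0 := by
    have h1 := cpk_eq p k hp2 s
    rw [hs, zero_mul] at h1
    have h2 := h1.symm
    rcases mul_eq_zero.mp h2 with h3 | h3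
    · exfalso
      rcases mul_eq_zero.mp h3 with h5 | h5
      · norm_num at h5
      · exact Complex.exp_ne_zero _ h5
    · exact h3
  -- hence Ee (k+1) (v + w₀) = Ee (k+1) (v - w₀)
  have hkey := key_identity k v w₀
  rw [hT, mul_zero] at hkey
  have hsinh : Complex.sinh v ≠ 0 := by
    rw [hv, ← Complex.ofReal_sinh]
    exact_mod_cast (Real.sinh_pos_iff.mpr hvpos).ne'
  have hEE : Ee (k + 1) (v + w₀) = Ee (k + 1) (v - w₀) := by
    have := (mul_eq_zero.mp hkey.symm).resolve_left hsinh
    linear_combination this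
  -- real part of w₀
  have hw₀re : w₀.re = s.re * vR := by
    rw [hw₀, hv]
    simp [Complex.mul_re]
  have hn1 : 0 < k + 1 := Nat.succ_pos k
  rcases lt_or_gt_of_ne hre with hneg | hpos
  · -- s.re < 0 : use w = -w₀
    have hw : 0 < (-w₀).re := by
      rw [Complex.neg_re, hw₀re]
      nlinarith
    have hlt := Ee_abs_lt hn1 hvpos hw
    rw [show (vR : ℂ) + -w₀ = v - w₀ by rw [hv]; ring,
      show (vR : ℂ) - -w₀ = v + w₀ by rw [hv]; ring] at hlt
    rw [hEE] at hlt
    exact lt_irrefl _ hlt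
  · -- s.re > 0 : use w = w₀
    have hw : 0 < w₀.re := by
      rw [hw₀re]
      nlinarith
    have hlt := Ee_abs_lt hn1 hvpos hw
    rw [show (vR : ℂ) + w₀ = v + w₀ by rw [hv],
      show (vR : ℂ) - w₀ = v - w₀ by rw [hv]] at hlt
    rw [hEE] at hlt
    exact lt_irrefl _ hlt
end

section
/- Let $p$ be an odd prime, $k \geq 1$, and let $z$ be on the unit circle, $z \neq \pm 1$. Then $\left| \frac{(p-1)^2}{p^{k+2}} \cdot \frac{z - z^{-1}}{2i} \sum_{j=0}^{k} \frac{p^{j+1}-1}{p-1}\frac{p^{k-j+1}-1}{p-1} z^{k-2j} \; - \; \frac{z^{k+1} - z^{-k-1}}{2i} \right| < 1$. -/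
open Complex Finset

/-- Real inequality: the sum of `1 - c j` is strictly less than 1. -/
lemma stmt5_real (P : ℝ) (hP : 3 ≤ P) (k : ℕ) :
    ∑ j ∈ Finset.range (k + 1),
      (1 - (P ^ (j + 1) - 1) * (P ^ (k - j + 1) - 1) / P ^ (k + 2)) < 1 := by
  have hP0 : 0 < P := by linarith
  have hP1 : P ≠ 1 := by intro h; linarith [h]
  have hpow : (0:ℝ) < P ^ (k + 2) := pow_pos hP0 _
  have hstep : ∀ j ∈ Finset.range (k + 1),
      (1 - (P ^ (j + 1) - 1) * (P ^ (k - j + 1) - 1) / P ^ (k + 2))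
        = (P ^ (j + 1) + P ^ (k - j + 1) - 1) / P ^ (k + 2) := by
    intro j hj
    have hj' : j ≤ k := by simpa [Nat.lt_succ_iff] using hj
    have hmul : P ^ (j + 1) * P ^ (k - j + 1) = P ^ (k + 2) := by
      rw [← pow_add]; congr 1; omega
    field_simp
    nlinarith [hmul]
  rw [Finset.sum_congr rfl hstep, ← Finset.sum_div]
  rw [div_lt_one hpow]
  have hrefl : ∑ j ∈ Finset.range (k + 1), P ^ (k - j + 1)
      = ∑ j ∈ Finset.range (k + 1), P ^ (j + 1) :=
    by simpa using Finset.sum_range_reflect (fun j => P ^ (j + 1)) (k + 1)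
  have hsplit : ∑ j ∈ Finset.range (k + 1), (P ^ (j + 1) + P ^ (k - j + 1) - 1)
      = 2 * (∑ j ∈ Finset.range (k + 1), P ^ (j + 1)) - (k + 1) := by
    rw [Finset.sum_sub_distrib, Finset.sum_add_distrib, hrefl]
    simp [two_mul]
  rw [hsplit]
  have hgeom : ∑ j ∈ Finset.range (k + 1), P ^ (j + 1)
      = P * ((P ^ (k + 1) - 1) / (P - 1)) := by
    rw [← geom_sum_eq hP1 (k + 1), Finset.mul_sum]
    exact Finset.sum_congr rfl fun j _ => by rw [pow_succ']
  rw [hgeom]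
  have h1 : (1:ℝ) ≤ P ^ (k + 1) := one_le_pow₀ (by linarith)
  have hPm1 : (0:ℝ) < P - 1 := by linarith
  have hPk : P ^ (k + 2) = P * P ^ (k + 1) := by rw [pow_succ]; ring
  have key : 2 * (P * ((P ^ (k + 1) - 1) / (P - 1))) ≤ P * (P ^ (k + 1) - 1) := by
    rw [show 2 * (P * ((P ^ (k + 1) - 1) / (P - 1)))
        = (2 * (P * (P ^ (k + 1) - 1))) / (P - 1) by ring, div_le_iff₀ hPm1]
    nlinarith [mul_nonneg hP0.le (by linarith : (0:ℝ) ≤ P ^ (k + 1) - 1)]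
  have hk1 : (0:ℝ) < (k:ℝ) + 1 := by positivity
  nlinarith [key, hk1, hPk]

theorem stmt5 (p : ℕ) (hp : p.Prime) (hodd : Odd p) (k : ℕ) (hk : 1 ≤ k)
    (z : ℂ) (hz : ‖z‖ = 1) (hz1 : z ≠ 1) (hz2 : z ≠ -1) :
    ‖
      ((((p : ℂ) - 1) ^ 2 / (p : ℂ) ^ (k + 2)) * ((z - z⁻¹) / (2 * Complex.I)) *
        (∑ j ∈ Finset.range (k + 1),
          (((p : ℂ) ^ (j + 1) - 1) / ((p : ℂ) - 1)) *
          (((p : ℂ) ^ (k - j + 1) - 1) / ((p : ℂ) - 1)) *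
          z ^ ((k : ℤ) - 2 * (j : ℤ)))
        - (z ^ ((k : ℤ) + 1) - z ^ (-((k : ℤ) + 1))) / (2 * Complex.I))‖ < 1 := by
  -- basic facts
  have hp2 : p ≠ 2 := by
    rintro rfl
    exact (Nat.not_odd_iff_even.mpr even_two) hodd
  have hp3 : 3 ≤ p := by
    have := hp.two_le; omega
  have hp3R : 3 ≤ (p : ℝ) := by exact_mod_cast hp3
  have hz0 : z ≠ 0 := by
    intro h; rw [h] at hz; simp at hz
  have hp0C : (p : ℂ) ≠ 0 := by
    exact_mod_cast Nat.cast_ne_zero.mpr (by omega : p ≠ 0)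
  have hp1C : (p : ℂ) - 1 ≠ 0 := by
    rw [sub_ne_zero]
    exact_mod_cast (by omega : p ≠ 1)
  set c : ℕ → ℝ := fun j => ((p:ℝ) ^ (j + 1) - 1) * ((p:ℝ) ^ (k - j + 1) - 1) / (p:ℝ) ^ (k + 2)
    with hc_def
  -- telescoping identity
  have hterm : ∀ j : ℕ, (z - z⁻¹) * z ^ ((k : ℤ) - 2 * (j : ℤ))
      = z ^ ((k : ℤ) - 2 * (j : ℤ) + 1) - z ^ ((k : ℤ) - 2 * ((j : ℤ) + 1) + 1) := by
    intro j
    have h2 : (k : ℤ) - 2 * ((j : ℤ) + 1) + 1 = ((k : ℤ) - 2 * (j : ℤ)) - 1 := by ring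
    rw [h2, zpow_add_one₀ hz0, zpow_sub_one₀ hz0]
    ring
  have htel : z ^ ((k : ℤ) + 1) - z ^ (-((k : ℤ) + 1))
      = (z - z⁻¹) * ∑ j ∈ Finset.range (k + 1), z ^ ((k : ℤ) - 2 * (j : ℤ)) := by
    rw [Finset.mul_sum]
    have := Finset.sum_range_sub' (fun j : ℕ => z ^ ((k : ℤ) - 2 * (j : ℤ) + 1)) (k + 1)
    calc z ^ ((k : ℤ) + 1) - z ^ (-((k : ℤ) + 1))
        = z ^ ((k : ℤ) - 2 * ((0:ℕ) : ℤ) + 1) - z ^ ((k : ℤ) - 2 * (((k+1:ℕ)) : ℤ) + 1) := by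
          push_cast; ring_nf
      _ = ∑ j ∈ Finset.range (k + 1),
            (z ^ ((k : ℤ) - 2 * (j : ℤ) + 1) - z ^ ((k : ℤ) - 2 * ((j:ℤ) + 1) + 1)) := by
          rw [← this]
          apply Finset.sum_congr rfl
          intro j _
          push_cast
          ring_nf
      _ = ∑ j ∈ Finset.range (k + 1), (z - z⁻¹) * z ^ ((k : ℤ) - 2 * (j : ℤ)) := by
          exact Finset.sum_congr rfl fun j _ => (hterm j).symm
  -- rewrite the argument
  have harg : (((p : ℂ) - 1) ^ 2 / (p : ℂ) ^ (k + 2)) * ((z - z⁻¹) / (2 * Complex.I)) *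
        (∑ j ∈ Finset.range (k + 1),
          (((p : ℂ) ^ (j + 1) - 1) / ((p : ℂ) - 1)) *
          (((p : ℂ) ^ (k - j + 1) - 1) / ((p : ℂ) - 1)) *
          z ^ ((k : ℤ) - 2 * (j : ℤ)))
        - (z ^ ((k : ℤ) + 1) - z ^ (-((k : ℤ) + 1))) / (2 * Complex.I)
      = ((z - z⁻¹) / (2 * Complex.I)) *
          ∑ j ∈ Finset.range (k + 1), (((c j : ℝ) : ℂ) - 1) * z ^ ((k : ℤ) - 2 * (j : ℤ)) := by
    rw [htel, Finset.mul_sum, Finset.mul_sum, Finset.mul_sum, Finset.sum_div,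
      ← Finset.sum_sub_distrib]
    apply Finset.sum_congr rfl
    intro j _
    have hcj : ((c j : ℝ) : ℂ)
        = ((p:ℂ) ^ (j + 1) - 1) * ((p:ℂ) ^ (k - j + 1) - 1) / (p:ℂ) ^ (k + 2) := by
      simp only [hc_def]
      push_cast
      ring
    have hpk0 : ((p:ℂ)) ^ (k + 2) ≠ 0 := pow_ne_zero _ hp0C
    have hscal : ((p:ℂ) - 1) ^ 2 / (p:ℂ) ^ (k + 2) *
        ((((p:ℂ) ^ (j + 1) - 1) / ((p:ℂ) - 1)) * (((p:ℂ) ^ (k - j + 1) - 1) / ((p:ℂ) - 1)))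
        = ((c j : ℝ) : ℂ) := by
      rw [hcj]
      field_simp
    linear_combination (((z - z⁻¹) / (2 * Complex.I)) * z ^ ((k : ℤ) - 2 * (j : ℤ))) * hscal
  rw [harg, norm_mul]
  -- bound the two factors
  have hW : ‖(z - z⁻¹) / (2 * Complex.I)‖ ≤ 1 := by
    rw [norm_div, norm_mul, Complex.norm_I, Complex.norm_two, mul_one]
    rw [div_le_one (by norm_num : (0:ℝ) < 2)]
    calc ‖z - z⁻¹‖ ≤ ‖z‖ + ‖z⁻¹‖ :=
          (norm_sub_le z z⁻¹)
      _ = 2 := by rw [norm_inv, hz]; norm_num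
  have hcle : ∀ j ∈ Finset.range (k + 1), c j ≤ 1 := by
    intro j hj
    have hj' : j ≤ k := Nat.lt_succ_iff.mp (Finset.mem_range.mp hj)
    have hmul : (p:ℝ) ^ (j + 1) * (p:ℝ) ^ (k - j + 1) = (p:ℝ) ^ (k + 2) := by
      rw [← pow_add]; congr 1; omega
    have h1 : (1:ℝ) ≤ (p:ℝ) ^ (j + 1) := one_le_pow₀ (by linarith)
    have h2 : (1:ℝ) ≤ (p:ℝ) ^ (k - j + 1) := one_le_pow₀ (by linarith)
    rw [hc_def]
    simp only
    rw [div_le_one (by positivity)]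
    nlinarith [hmul]
  have hS : ‖∑ j ∈ Finset.range (k + 1), (((c j : ℝ) : ℂ) - 1) *
        z ^ ((k : ℤ) - 2 * (j : ℤ))‖
      ≤ ∑ j ∈ Finset.range (k + 1), (1 - c j) := by
    refine le_trans (norm_sum_le _ _) (Finset.sum_le_sum ?_)
    intro j hj
    rw [norm_mul, norm_zpow, hz, one_zpow, mul_one]
    rw [show (((c j : ℝ) : ℂ) - 1) = (((c j - 1 : ℝ)) : ℂ) by push_cast; ring,
      Complex.norm_real, Real.norm_eq_abs]
    rw [abs_of_nonpos (by linarith [hcle j hj])]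
    ring_nf
    exact le_refl _
  have hfin : ∑ j ∈ Finset.range (k + 1), (1 - c j) < 1 := by
    have := stmt5_real (p:ℝ) hp3R k
    simpa [hc_def] using this
  calc ‖(z - z⁻¹) / (2 * Complex.I)‖ *
        ‖∑ j ∈ Finset.range (k + 1), (((c j : ℝ) : ℂ) - 1) *
          z ^ ((k : ℤ) - 2 * (j : ℤ))‖
      ≤ 1 * ∑ j ∈ Finset.range (k + 1), (1 - c j) := by
        exact mul_le_mul hW hS (norm_nonneg _) (by norm_num)
    _ < 1 := by rw [one_mul]; exact hfin
end
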